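/- arXiv:2310.18563 — 10 statements merged into one kernel-verified Lean document; each statement's English description precedes it below -/
import Mathlib

section
/- Suppose the estimated propensity scores p_i satisfy the IPT balancing condition for the treated group, N^{-1} ∑_{i=1}^N W_i X_i / p_i = X̄, where X̄ = N^{-1} ∑_{i=1}^N X_i. Then for every coefficient vector β₁ ∈ ℝ^K, the augmented inverse probability weighting estimate of μ₁ equals the inverse probability weighting estimate of μ₁: N^{-1} ∑_{i=1}^N W_i (Y_i − X_i β₁) / p_i + N^{-1} ∑_{i=1}^N X_i β₁ = N^{-1} ∑_{i=1}^N W_i Y_i / p_i. -/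
/-!
Write `ωᵢ = Wᵢ / pᵢ`. Balancing each covariate column under the weights `ω` balances every
linear combination `Xᵢ β` of them, because the weighted sum can be exchanged with the sum
over covariates. The augmentation term of AIPW is exactly the difference between the weighted
and the unweighted mean of `Xᵢ β₁`, so it vanishes.
-/

open Finset

section WeightedBalance

variable {ι κ R : Type*} [Fintype ι] [Fintype κ] [CommRing R]

theorem mul_sum_mul_sum_mul_comm (c : R) (w : ι → R) (X : ι → κ → R) (β : κ → R) :
    c * ∑ i, w i * ∑ j, X i j * β j = ∑ j, (c * ∑ i, w i * X i j) * β j := by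
  simp only [mul_sum, sum_mul]
  rw [sum_comm]
  simp only [mul_assoc]

theorem mul_sum_mul_linear_of_balance {c : R} {w : ι → R} {X : ι → κ → R}
    (hbal : ∀ j, c * ∑ i, w i * X i j = c * ∑ i, X i j) (β : κ → R) :
    c * ∑ i, w i * ∑ j, X i j * β j = c * ∑ i, ∑ j, X i j * β j := by
  calc c * ∑ i, w i * ∑ j, X i j * β j
      = ∑ j, (c * ∑ i, w i * X i j) * β j := mul_sum_mul_sum_mul_comm c w X β
    _ = ∑ j, (c * ∑ i, X i j) * β j := by simp only [hbal]
    _ = c * ∑ i, ∑ j, X i j * β j := by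
      simpa only [Pi.one_apply, one_mul] using (mul_sum_mul_sum_mul_comm c 1 X β).symm

theorem augmented_eq_weighted_of_balance {c : R} {w : ι → R} {X : ι → κ → R}
    (hbal : ∀ j, c * ∑ i, w i * X i j = c * ∑ i, X i j) (Y : ι → R) (β : κ → R) :
    c * ∑ i, w i * (Y i - ∑ j, X i j * β j) + c * ∑ i, ∑ j, X i j * β j
      = c * ∑ i, w i * Y i := by
  simp only [mul_sub, sum_sub_distrib]
  rw [mul_sum_mul_linear_of_balance hbal β]
  ring

end WeightedBalance

theorem aipw_eq_ipw_mu1_ipt_general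
    (N K : ℕ)
    (W : Fin N → ℝ)
    (X : Fin N → Fin K → ℝ)
    (Y : Fin N → ℝ)
    (p : Fin N → ℝ)
    (hbal : ∀ j, (N : ℝ)⁻¹ * ∑ i, W i * X i j / p i = (N : ℝ)⁻¹ * ∑ i, X i j)
    (β₁ : Fin K → ℝ) :
    (N : ℝ)⁻¹ * ∑ i, W i * (Y i - ∑ j, X i j * β₁ j) / p i
      + (N : ℝ)⁻¹ * ∑ i, ∑ j, X i j * β₁ j
    = (N : ℝ)⁻¹ * ∑ i, W i * Y i / p i := by
  simp only [mul_div_right_comm (W _)] at hbal ⊢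
  exact augmented_eq_weighted_of_balance hbal Y β₁

/-- Under IPT balancing for the treated group, the AIPW estimate of μ₁ equals
the IPW estimate of μ₁, for every coefficient vector β₁. -/
theorem aipw_eq_ipw_mu1_ipt
    (N K : ℕ) (hN : 0 < N) (hK : 0 < K)
    (W : Fin N → ℝ) (hW : ∀ i, W i = 0 ∨ W i = 1)
    (X : Fin N → Fin K → ℝ) (hX1 : ∀ i, X i ⟨0, hK⟩ = 1)
    (Y : Fin N → ℝ)
    (p : Fin N → ℝ) (hp : ∀ i, p i ∈ Set.Ioo (0 : ℝ) 1)
    (hbal : ∀ j, (N : ℝ)⁻¹ * ∑ i, W i * X i j / p i = (N : ℝ)⁻¹ * ∑ i, X i j)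
    (β₁ : Fin K → ℝ) :
    (N : ℝ)⁻¹ * ∑ i, W i * (Y i - ∑ j, X i j * β₁ j) / p i
      + (N : ℝ)⁻¹ * ∑ i, ∑ j, X i j * β₁ j
    = (N : ℝ)⁻¹ * ∑ i, W i * Y i / p i :=
  aipw_eq_ipw_mu1_ipt_general N K W X Y p hbal β₁
end

section
/- Suppose the estimated propensity scores p_i satisfy the IPT balancing condition for the treated group, N^{-1} ∑_{i=1}^N W_i X_i / p_i = X̄, where X̄ = N^{-1} ∑_{i=1}^N X_i, and let β̃₁ ∈ ℝ^K satisfy the weighted least squares first-order conditions on the treated units, ∑_{i=1}^N (W_i / p_i) X_iᵀ (Y_i − X_i β̃₁) = 0. Then the inverse probability weighted regression adjustment estimate of μ₁ equals the inverse probability weighting estimate of μ₁: X̄ β̃₁ = N^{-1} ∑_{i=1}^N W_i Y_i / p_i. -/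
/-!
If the weights `w` reproduce the `v`-weighted covariate totals, then the `v`-weighted total of
the fitted values `X β` equals their `w`-weighted total, since both are linear in the covariates.
When `X` contains an intercept, the weighted normal equation for that column says the
`w`-weighted residuals sum to zero, so the `w`-weighted fitted values and outcomes have the same
total. IPT balancing is the
case `w i = W i / (N p i)`, `v i = 1 / N`.
-/

open Finset

section WeightedRegression

variable {ι κ : Type*} [Fintype ι] [Fintype κ]

theorem sum_weighted_column_mul_eq (w : ι → ℝ) (X : ι → κ → ℝ) (β : κ → ℝ) :
    ∑ j, (∑ i, w i * X i j) * β j = ∑ i, w i * ∑ k, X i k * β k :=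
  (Matrix.dotProduct_mulVec w (Matrix.of X) β).symm

theorem sum_mul_fitted_eq_of_intercept (w Y : ι → ℝ) (X : ι → κ → ℝ) (β : κ → ℝ) {j₀ : κ}
    (hX : ∀ i, X i j₀ = 1) (hfoc : ∑ i, w i * X i j₀ * (Y i - ∑ k, X i k * β k) = 0) :
    ∑ i, w i * ∑ k, X i k * β k = ∑ i, w i * Y i := by
  simp only [hX, mul_one, mul_sub, sum_sub_distrib, sub_eq_zero] at hfoc
  exact hfoc.symm

theorem sum_weighted_column_mul_eq_of_balance (w v Y : ι → ℝ) (X : ι → κ → ℝ) (β : κ → ℝ)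
    {j₀ : κ} (hbal : ∀ j, ∑ i, w i * X i j = ∑ i, v i * X i j) (hX : ∀ i, X i j₀ = 1)
    (hfoc : ∑ i, w i * X i j₀ * (Y i - ∑ k, X i k * β k) = 0) :
    ∑ j, (∑ i, v i * X i j) * β j = ∑ i, w i * Y i := by
  simp_rw [← hbal]
  rw [sum_weighted_column_mul_eq, sum_mul_fitted_eq_of_intercept w Y X β hX hfoc]

end WeightedRegression

theorem ipwra_eq_ipw_mu1_ipt_general
    (N K : ℕ) (hK : 0 < K)
    (W : Fin N → ℝ)
    (X : Fin N → Fin K → ℝ) (hX1 : ∀ i, X i ⟨0, hK⟩ = 1)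
    (Y : Fin N → ℝ)
    (p : Fin N → ℝ)
    (hbal : ∀ j, (N : ℝ)⁻¹ * ∑ i, W i * X i j / p i = (N : ℝ)⁻¹ * ∑ i, X i j)
    (βt₁ : Fin K → ℝ)
    (hfoc : ∀ j, ∑ i, (W i / p i) * X i j * (Y i - ∑ k, X i k * βt₁ k) = 0) :
    ∑ j, ((N : ℝ)⁻¹ * ∑ i, X i j) * βt₁ j
    = (N : ℝ)⁻¹ * ∑ i, W i * Y i / p i := by
  have hbal' : ∀ j, ∑ i, (N : ℝ)⁻¹ * (W i / p i) * X i j = ∑ i, (N : ℝ)⁻¹ * X i j := by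
    intro j
    simpa only [mul_sum, mul_assoc, mul_div_right_comm] using hbal j
  have hfoc' : ∑ i, (N : ℝ)⁻¹ * (W i / p i) * X i ⟨0, hK⟩ * (Y i - ∑ k, X i k * βt₁ k) = 0 := by
    simp only [mul_assoc, ← mul_sum]
    simp only [← mul_assoc, hfoc, mul_zero]
  have key := sum_weighted_column_mul_eq_of_balance _ _ Y X βt₁ hbal' hX1 hfoc'
  simp only [← mul_sum] at key
  rw [key, mul_sum]
  exact sum_congr rfl fun i _ => by ring

/-- Under IPT balancing for the treated group, the IPWRA estimate of μ₁ equals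
the IPW estimate of μ₁. -/
theorem ipwra_eq_ipw_mu1_ipt
    (N K : ℕ) (hN : 0 < N) (hK : 0 < K)
    (W : Fin N → ℝ) (hW : ∀ i, W i = 0 ∨ W i = 1)
    (X : Fin N → Fin K → ℝ) (hX1 : ∀ i, X i ⟨0, hK⟩ = 1)
    (Y : Fin N → ℝ)
    (p : Fin N → ℝ) (hp : ∀ i, p i ∈ Set.Ioo (0 : ℝ) 1)
    (hbal : ∀ j, (N : ℝ)⁻¹ * ∑ i, W i * X i j / p i = (N : ℝ)⁻¹ * ∑ i, X i j)
    (βt₁ : Fin K → ℝ)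
    (hfoc : ∀ j, ∑ i, (W i / p i) * X i j * (Y i - ∑ k, X i k * βt₁ k) = 0) :
    ∑ j, ((N : ℝ)⁻¹ * ∑ i, X i j) * βt₁ j
    = (N : ℝ)⁻¹ * ∑ i, W i * Y i / p i :=
  ipwra_eq_ipw_mu1_ipt_general N K hK W X hX1 Y p hbal βt₁ hfoc
end

section
/- Suppose the estimated propensity scores p_i satisfy the IPT balancing condition for the untreated group, N^{-1} ∑_{i=1}^N (1−W_i) X_i / (1−p_i) = X̄, where X̄ = N^{-1} ∑_{i=1}^N X_i. Then for every coefficient vector β₀ ∈ ℝ^K, the augmented inverse probability weighting estimate of μ₀ equals the inverse probability weighting estimate of μ₀: N^{-1} ∑_{i=1}^N (1−W_i)(Y_i − X_i β₀) / (1−p_i) + N^{-1} ∑_{i=1}^N X_i β₀ = N^{-1} ∑_{i=1}^N (1−W_i) Y_i / (1−p_i). -/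
/-! Balancing says that the weights `(1 - Wᵢ)/(1 - pᵢ)` reproduce the sample mean of every
covariate, hence of every linear combination `Xᵢ β₀` of covariates. So the weighted mean of the
fitted values, which the AIPW estimate subtracts, cancels the unweighted mean that it adds back. -/

open Finset

section Balancing

variable {R ι κ : Type*} [CommRing R] [Fintype ι] [Fintype κ]

theorem mul_sum_mul_linear_fit_of_balanced (c : R) (w : ι → R) (X : ι → κ → R) (β : κ → R)
    (hbal : ∀ j, c * ∑ i, w i * X i j = c * ∑ i, X i j) :
    c * ∑ i, w i * ∑ j, X i j * β j = c * ∑ i, ∑ j, X i j * β j := by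
  calc c * ∑ i, w i * ∑ j, X i j * β j = ∑ j, (c * ∑ i, w i * X i j) * β j := by
        simp only [mul_sum, sum_mul, mul_assoc]
        exact sum_comm
    _ = ∑ j, (c * ∑ i, X i j) * β j := by simp only [hbal]
    _ = c * ∑ i, ∑ j, X i j * β j := by
        simp only [mul_sum, sum_mul, mul_assoc]
        exact sum_comm

theorem mul_sum_augmented_eq_of_balanced (c : R) (w Y f : ι → R)
    (hbal : c * ∑ i, w i * f i = c * ∑ i, f i) :
    c * ∑ i, w i * (Y i - f i) + c * ∑ i, f i = c * ∑ i, w i * Y i := by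
  simp only [mul_sub, sum_sub_distrib]
  linear_combination -hbal

end Balancing

theorem aipw_eq_ipw_mu0_ipt_general
    (N K : ℕ)
    (W : Fin N → ℝ)
    (X : Fin N → Fin K → ℝ)
    (Y : Fin N → ℝ)
    (p : Fin N → ℝ)
    (hbal : ∀ j, (N : ℝ)⁻¹ * ∑ i, (1 - W i) * X i j / (1 - p i)
      = (N : ℝ)⁻¹ * ∑ i, X i j)
    (β₀ : Fin K → ℝ) :
    (N : ℝ)⁻¹ * ∑ i, (1 - W i) * (Y i - ∑ j, X i j * β₀ j) / (1 - p i)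
      + (N : ℝ)⁻¹ * ∑ i, ∑ j, X i j * β₀ j
    = (N : ℝ)⁻¹ * ∑ i, (1 - W i) * Y i / (1 - p i) := by
  set w : Fin N → ℝ := fun i ↦ (1 - W i) / (1 - p i)
  have hweight : ∀ (i : Fin N) (a : ℝ), (1 - W i) * a / (1 - p i) = w i * a :=
    fun i a ↦ mul_div_right_comm _ _ _
  simp only [hweight] at hbal ⊢
  exact mul_sum_augmented_eq_of_balanced _ w Y _
    (mul_sum_mul_linear_fit_of_balanced _ w X β₀ hbal)

/-- Under IPT balancing for the untreated group, the AIPW estimate of μ₀ equals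
the IPW estimate of μ₀, for every coefficient vector β₀. -/
theorem aipw_eq_ipw_mu0_ipt
    (N K : ℕ) (hN : 0 < N) (hK : 0 < K)
    (W : Fin N → ℝ) (hW : ∀ i, W i = 0 ∨ W i = 1)
    (X : Fin N → Fin K → ℝ) (hX1 : ∀ i, X i ⟨0, hK⟩ = 1)
    (Y : Fin N → ℝ)
    (p : Fin N → ℝ) (hp : ∀ i, p i ∈ Set.Ioo (0 : ℝ) 1)
    (hbal : ∀ j, (N : ℝ)⁻¹ * ∑ i, (1 - W i) * X i j / (1 - p i)
      = (N : ℝ)⁻¹ * ∑ i, X i j)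
    (β₀ : Fin K → ℝ) :
    (N : ℝ)⁻¹ * ∑ i, (1 - W i) * (Y i - ∑ j, X i j * β₀ j) / (1 - p i)
      + (N : ℝ)⁻¹ * ∑ i, ∑ j, X i j * β₀ j
    = (N : ℝ)⁻¹ * ∑ i, (1 - W i) * Y i / (1 - p i) :=
  aipw_eq_ipw_mu0_ipt_general N K W X Y p hbal β₀
end

section
/- Suppose the estimated propensity scores p_i satisfy the IPT balancing condition for the untreated group, N^{-1} ∑_{i=1}^N (1−W_i) X_i / (1−p_i) = X̄, where X̄ = N^{-1} ∑_{i=1}^N X_i, and let β̃₀ ∈ ℝ^K satisfy the weighted least squares first-order conditions on the untreated units, ∑_{i=1}^N [(1−W_i) / (1−p_i)] X_iᵀ (Y_i − X_i β̃₀) = 0. Then the inverse probability weighted regression adjustment estimate of μ₀ equals the inverse probability weighting estimate of μ₀: X̄ β̃₀ = N^{-1} ∑_{i=1}^N (1−W_i) Y_i / (1−p_i). -/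
open Finset

/-
With a constant regressor, the first-order condition for that coefficient says the weighted
residuals sum to zero, so the weighted mean of the fitted values equals the weighted mean of the
outcomes. IPT balancing says the weighted covariate means are the sample means, so the fitted
value at the sample mean of the covariates is that same weighted mean of the fitted values.
-/

section WeightedLeastSquares

variable {ι κ R : Type*} [Fintype ι] [Fintype κ] [CommRing R]

theorem sum_mul_fitted_eq_sum_mul_of_foc_const (w Y : ι → R) (X : ι → κ → R) (β : κ → R)
    (c : κ) (hc : ∀ i, X i c = 1)
    (hfoc : ∑ i, w i * X i c * (Y i - ∑ k, X i k * β k) = 0) :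
    ∑ i, w i * ∑ k, X i k * β k = ∑ i, w i * Y i := by
  simp only [hc, mul_one, mul_sub, sum_sub_distrib, sub_eq_zero] at hfoc
  exact hfoc.symm

theorem sum_weighted_mean_mul_eq_sum_mul_fitted (w : ι → R) (X : ι → κ → R) (β : κ → R) :
    ∑ j, (∑ i, w i * X i j) * β j = ∑ i, w i * ∑ k, X i k * β k := by
  simp only [sum_mul, mul_sum, mul_assoc]
  exact sum_comm

end WeightedLeastSquares

theorem ipwra_eq_ipw_mu0_ipt_general
    (N K : ℕ) (hK : 0 < K)
    (W : Fin N → ℝ)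
    (X : Fin N → Fin K → ℝ) (hX1 : ∀ i, X i ⟨0, hK⟩ = 1)
    (Y : Fin N → ℝ)
    (p : Fin N → ℝ)
    (hbal : ∀ j, (N : ℝ)⁻¹ * ∑ i, (1 - W i) * X i j / (1 - p i)
      = (N : ℝ)⁻¹ * ∑ i, X i j)
    (βt₀ : Fin K → ℝ)
    (hfoc : ∀ j, ∑ i, ((1 - W i) / (1 - p i)) * X i j * (Y i - ∑ k, X i k * βt₀ k) = 0) :
    ∑ j, ((N : ℝ)⁻¹ * ∑ i, X i j) * βt₀ j
    = (N : ℝ)⁻¹ * ∑ i, (1 - W i) * Y i / (1 - p i) := by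
  set w : Fin N → ℝ := fun i => (1 - W i) / (1 - p i)
  calc ∑ j, ((N : ℝ)⁻¹ * ∑ i, X i j) * βt₀ j
      = (N : ℝ)⁻¹ * ∑ j, (∑ i, w i * X i j) * βt₀ j := by
        simp only [← hbal, mul_div_right_comm, mul_assoc, ← mul_sum, w]
    _ = (N : ℝ)⁻¹ * ∑ i, w i * Y i := by
        rw [sum_weighted_mean_mul_eq_sum_mul_fitted,
          sum_mul_fitted_eq_sum_mul_of_foc_const w Y X βt₀ ⟨0, hK⟩ hX1 (hfoc _)]
    _ = (N : ℝ)⁻¹ * ∑ i, (1 - W i) * Y i / (1 - p i) := by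
        simp only [mul_div_right_comm, w]

/-- Under IPT balancing for the untreated group, the IPWRA estimate of μ₀ equals
the IPW estimate of μ₀. -/
theorem ipwra_eq_ipw_mu0_ipt
    (N K : ℕ) (hN : 0 < N) (hK : 0 < K)
    (W : Fin N → ℝ) (hW : ∀ i, W i = 0 ∨ W i = 1)
    (X : Fin N → Fin K → ℝ) (hX1 : ∀ i, X i ⟨0, hK⟩ = 1)
    (Y : Fin N → ℝ)
    (p : Fin N → ℝ) (hp : ∀ i, p i ∈ Set.Ioo (0 : ℝ) 1)
    (hbal : ∀ j, (N : ℝ)⁻¹ * ∑ i, (1 - W i) * X i j / (1 - p i)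
      = (N : ℝ)⁻¹ * ∑ i, X i j)
    (βt₀ : Fin K → ℝ)
    (hfoc : ∀ j, ∑ i, ((1 - W i) / (1 - p i)) * X i j * (Y i - ∑ k, X i k * βt₀ k) = 0) :
    ∑ j, ((N : ℝ)⁻¹ * ∑ i, X i j) * βt₀ j
    = (N : ℝ)⁻¹ * ∑ i, (1 - W i) * Y i / (1 - p i) :=
  ipwra_eq_ipw_mu0_ipt_general N K hK W X hX1 Y p hbal βt₀ hfoc
end

section
/- (Proposition 1.) Suppose p¹_i ∈ (0,1) satisfy the IPT balancing condition for the treated group, N^{-1} ∑_{i=1}^N W_i X_i / p¹_i = X̄, and p⁰_i ∈ (0,1) satisfy the IPT balancing condition for the untreated group, N^{-1} ∑_{i=1}^N (1−W_i) X_i / (1−p⁰_i) = X̄, where X̄ = N^{-1} ∑_{i=1}^N X_i. Let β₁, β₀ ∈ ℝ^K be arbitrary coefficient vectors, and let β̃₁, β̃₀ ∈ ℝ^K satisfy the weighted least squares first-order conditions ∑_{i=1}^N (W_i / p¹_i) X_iᵀ (Y_i − X_i β̃₁) = 0 and ∑_{i=1}^N [(1−W_i)/(1−p⁰_i)] X_iᵀ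 (Y_i − X_i β̃₀) = 0. Then the IPW, AIPW, and IPWRA estimates of the ATE are numerically identical: N^{-1} ∑_{i=1}^N W_i Y_i / p¹_i − N^{-1} ∑_{i=1}^N (1−W_i) Y_i / (1−p⁰_i) = [N^{-1} ∑_{i=1}^N W_i (Y_i − X_i β₁)/p¹_i + N^{-1} ∑_{i=1}^N X_i β₁] − [N^{-1} ∑_{i=1}^N (1−W_i)(Y_i − X_i β₀)/(1−p⁰_i) + N^{-1} ∑_{i=1}^N X_i β₀] = X̄ β̃₁ − X̄ β̃₀. -/
/-!
Each arm is handled separately, for an arbitrary weight vector `ω` (here `W / p¹` or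
`(1 - W) / (1 - p⁰)`). Exchanging the two sums shows that the (weighted) mean of fitted values
`X_i β` is the (weighted) mean of `X` applied to `β`, so balancing makes the weighted and unweighted
means of any linear prediction agree; this cancels the regression term of AIPW. For IPWRA, the
normal equation at the constant regressor says that the weighted residuals sum to zero, so the
weighted mean of `Y` equals the weighted mean of the fitted values, i.e. `X̄ β̃` by balancing.
-/

open Finset

section EstimatorArms

variable {ι κ R : Type*} [Fintype ι] [Fintype κ] [CommRing R]

theorem mul_sum_weighted_fitted (c : R) (ω : ι → R) (X : ι → κ → R) (β : κ → R) :
    c * ∑ i, ω i * ∑ j, X i j * β j = ∑ j, (c * ∑ i, ω i * X i j) * β j := by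
  simp only [mul_sum, sum_mul]
  rw [sum_comm]
  simp only [mul_assoc]

theorem mul_sum_weighted_fitted_of_balanced {c : R} {ω : ι → R} {X : ι → κ → R}
    (hbal : ∀ j, c * ∑ i, ω i * X i j = c * ∑ i, X i j) (β : κ → R) :
    c * ∑ i, ω i * ∑ j, X i j * β j = ∑ j, (c * ∑ i, X i j) * β j := by
  simp only [mul_sum_weighted_fitted, hbal]

theorem aipw_arm_eq_ipw_arm {c : R} {ω : ι → R} {X : ι → κ → R}
    (hbal : ∀ j, c * ∑ i, ω i * X i j = c * ∑ i, X i j) (Y : ι → R) (β : κ → R) :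
    c * ∑ i, ω i * (Y i - ∑ j, X i j * β j) + c * ∑ i, ∑ j, X i j * β j
      = c * ∑ i, ω i * Y i := by
  have hfit : c * ∑ i, ∑ j, X i j * β j = c * ∑ i, ω i * ∑ j, X i j * β j := by
    rw [mul_sum_weighted_fitted_of_balanced hbal]
    simpa only [Pi.one_apply, one_mul] using mul_sum_weighted_fitted c 1 X β
  simp only [hfit, mul_sub, sum_sub_distrib]
  ring

theorem sum_weighted_eq_sum_weighted_fitted_of_normal_eq {ω : ι → R} {X : ι → κ → R}
    {Y : ι → R} {β : κ → R} {j₀ : κ} (hconst : ∀ i, X i j₀ = 1)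
    (hnormal : ∑ i, ω i * X i j₀ * (Y i - ∑ k, X i k * β k) = 0) :
    ∑ i, ω i * Y i = ∑ i, ω i * ∑ k, X i k * β k := by
  simp only [hconst, mul_one, mul_sub, sum_sub_distrib] at hnormal
  exact sub_eq_zero.mp hnormal

theorem ipwra_arm_eq_ipw_arm {c : R} {ω : ι → R} {X : ι → κ → R} {Y : ι → R} {β : κ → R}
    {j₀ : κ} (hbal : ∀ j, c * ∑ i, ω i * X i j = c * ∑ i, X i j)
    (hconst : ∀ i, X i j₀ = 1)
    (hnormal : ∑ i, ω i * X i j₀ * (Y i - ∑ k, X i k * β k) = 0) :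
    ∑ j, (c * ∑ i, X i j) * β j = c * ∑ i, ω i * Y i := by
  rw [sum_weighted_eq_sum_weighted_fitted_of_normal_eq hconst hnormal,
    mul_sum_weighted_fitted_of_balanced hbal]

end EstimatorArms

theorem ipt_ipw_aipw_ipwra_ate_equivalence_general
    (N K : ℕ) (hK : 0 < K)
    (W : Fin N → ℝ)
    (X : Fin N → Fin K → ℝ) (hX1 : ∀ i, X i ⟨0, hK⟩ = 1)
    (Y : Fin N → ℝ)
    (p1 p0 : Fin N → ℝ)
    (hbal1 : ∀ j, (N : ℝ)⁻¹ * ∑ i, W i * X i j / p1 i = (N : ℝ)⁻¹ * ∑ i, X i j)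
    (hbal0 : ∀ j, (N : ℝ)⁻¹ * ∑ i, (1 - W i) * X i j / (1 - p0 i)
      = (N : ℝ)⁻¹ * ∑ i, X i j)
    (β₁ β₀ βt₁ βt₀ : Fin K → ℝ)
    (hfoc1 : ∀ j, ∑ i, (W i / p1 i) * X i j * (Y i - ∑ k, X i k * βt₁ k) = 0)
    (hfoc0 : ∀ j, ∑ i, ((1 - W i) / (1 - p0 i)) * X i j * (Y i - ∑ k, X i k * βt₀ k) = 0) :
    ((N : ℝ)⁻¹ * ∑ i, W i * Y i / p1 i
        - (N : ℝ)⁻¹ * ∑ i, (1 - W i) * Y i / (1 - p0 i)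
      = ((N : ℝ)⁻¹ * ∑ i, W i * (Y i - ∑ j, X i j * β₁ j) / p1 i
          + (N : ℝ)⁻¹ * ∑ i, ∑ j, X i j * β₁ j)
        - ((N : ℝ)⁻¹ * ∑ i, (1 - W i) * (Y i - ∑ j, X i j * β₀ j) / (1 - p0 i)
          + (N : ℝ)⁻¹ * ∑ i, ∑ j, X i j * β₀ j))
    ∧ ((N : ℝ)⁻¹ * ∑ i, W i * Y i / p1 i
        - (N : ℝ)⁻¹ * ∑ i, (1 - W i) * Y i / (1 - p0 i)
      = ∑ j, ((N : ℝ)⁻¹ * ∑ i, X i j) * βt₁ j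
        - ∑ j, ((N : ℝ)⁻¹ * ∑ i, X i j) * βt₀ j) := by
  -- `a * b / p = a / p * b` exposes the weights `W i / p1 i` and `(1 - W i) / (1 - p0 i)`.
  simp only [mul_div_right_comm] at hbal1 hbal0 ⊢
  constructor
  · rw [aipw_arm_eq_ipw_arm hbal1, aipw_arm_eq_ipw_arm hbal0]
  · rw [ipwra_arm_eq_ipw_arm hbal1 hX1 (hfoc1 _), ipwra_arm_eq_ipw_arm hbal0 hX1 (hfoc0 _)]

/-- Proposition 1: with IPT weights, the IPW, AIPW (linear conditional means),
and IPWRA (linear conditional means) estimates of the ATE are numerically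
identical. -/
theorem ipt_ipw_aipw_ipwra_ate_equivalence
    (N K : ℕ) (hN : 0 < N) (hK : 0 < K)
    (W : Fin N → ℝ) (hW : ∀ i, W i = 0 ∨ W i = 1)
    (X : Fin N → Fin K → ℝ) (hX1 : ∀ i, X i ⟨0, hK⟩ = 1)
    (Y : Fin N → ℝ)
    (p1 p0 : Fin N → ℝ)
    (hp1 : ∀ i, p1 i ∈ Set.Ioo (0 : ℝ) 1) (hp0 : ∀ i, p0 i ∈ Set.Ioo (0 : ℝ) 1)
    (hbal1 : ∀ j, (N : ℝ)⁻¹ * ∑ i, W i * X i j / p1 i = (N : ℝ)⁻¹ * ∑ i, X i j)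
    (hbal0 : ∀ j, (N : ℝ)⁻¹ * ∑ i, (1 - W i) * X i j / (1 - p0 i)
      = (N : ℝ)⁻¹ * ∑ i, X i j)
    (β₁ β₀ βt₁ βt₀ : Fin K → ℝ)
    (hfoc1 : ∀ j, ∑ i, (W i / p1 i) * X i j * (Y i - ∑ k, X i k * βt₁ k) = 0)
    (hfoc0 : ∀ j, ∑ i, ((1 - W i) / (1 - p0 i)) * X i j * (Y i - ∑ k, X i k * βt₀ k) = 0) :
    ((N : ℝ)⁻¹ * ∑ i, W i * Y i / p1 i
        - (N : ℝ)⁻¹ * ∑ i, (1 - W i) * Y i / (1 - p0 i)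
      = ((N : ℝ)⁻¹ * ∑ i, W i * (Y i - ∑ j, X i j * β₁ j) / p1 i
          + (N : ℝ)⁻¹ * ∑ i, ∑ j, X i j * β₁ j)
        - ((N : ℝ)⁻¹ * ∑ i, (1 - W i) * (Y i - ∑ j, X i j * β₀ j) / (1 - p0 i)
          + (N : ℝ)⁻¹ * ∑ i, ∑ j, X i j * β₀ j))
    ∧ ((N : ℝ)⁻¹ * ∑ i, W i * Y i / p1 i
        - (N : ℝ)⁻¹ * ∑ i, (1 - W i) * Y i / (1 - p0 i)
      = ∑ j, ((N : ℝ)⁻¹ * ∑ i, X i j) * βt₁ j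
        - ∑ j, ((N : ℝ)⁻¹ * ∑ i, X i j) * βt₀ j) :=
  ipt_ipw_aipw_ipwra_ate_equivalence_general N K hK W X hX1 Y p1 p0 hbal1 hbal0 β₁ β₀ βt₁ βt₀ hfoc1
    hfoc0
end

section
/- Suppose the estimated propensity scores p_i satisfy the CBPS sample moment conditions for the ATT, X̄₁ = N₁^{-1} ∑_{i=1}^N [p_i (1−W_i) / (1−p_i)] X_i, where N₁ = ∑_{i=1}^N W_i > 0 and X̄₁ = N₁^{-1} ∑_{i=1}^N W_i X_i. Then for every coefficient vector β₀ ∈ ℝ^K, the AIPW estimate of μ₀|₁ equals the IPW estimate of μ₀|₁: N₁^{-1} ∑_{i=1}^N [p_i (1−W_i)/(1−p_i)] (Y_i − X_i β₀) + X̄₁ β₀ = N₁^{-1} ∑_{i=1}^N p_i (1−W_i) Y_i / (1−p_i). -/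
/-! The AIPW estimate differs from the IPW estimate by `(X̄₁ - X̄_ω) β₀`, where `X̄_ω` is the
covariate mean of the controls under the weights `ω = p (1 - W) / (1 - p)`; the CBPS moment
conditions say precisely that `X̄₁ = X̄_ω`. -/

open Matrix Finset

theorem dotProduct_sub_mulVec_add_vecMul_dotProduct_of_balance {ι κ R : Type*}
    [Fintype ι] [Fintype κ] [CommRing R] (a ω Y : ι → R) (X : Matrix ι κ R) (β : κ → R)
    (hbal : a ᵥ* X = ω ᵥ* X) :
    ω ⬝ᵥ (Y - X *ᵥ β) + (a ᵥ* X) ⬝ᵥ β = ω ⬝ᵥ Y := by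
  rw [hbal, ← dotProduct_mulVec, dotProduct_sub, sub_add_cancel]

theorem aipw_eq_ipw_mu01_cbps_general
    (N K : ℕ)
    (W : Fin N → ℝ)
    (X : Fin N → Fin K → ℝ)
    (Y : Fin N → ℝ)
    (p : Fin N → ℝ)
    (hbal : ∀ j, (∑ i, W i)⁻¹ * ∑ i, W i * X i j
      = (∑ i, W i)⁻¹ * ∑ i, p i * (1 - W i) / (1 - p i) * X i j)
    (β₀ : Fin K → ℝ) :
    (∑ i, W i)⁻¹ * ∑ i, p i * (1 - W i) / (1 - p i) * (Y i - ∑ j, X i j * β₀ j)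
      + ∑ j, ((∑ i, W i)⁻¹ * ∑ i, W i * X i j) * β₀ j
    = (∑ i, W i)⁻¹ * ∑ i, p i * (1 - W i) * Y i / (1 - p i) := by
  set c := (∑ i, W i)⁻¹
  set ω : Fin N → ℝ := fun i ↦ c * (p i * (1 - W i) / (1 - p i))
  have hbal_vec : (c • W) ᵥ* X = ω ᵥ* X := by
    ext j
    simpa only [vecMul, dotProduct, Pi.smul_apply, smul_eq_mul, ω, mul_assoc, ← mul_sum]
      using hbal j
  have hidentity := dotProduct_sub_mulVec_add_vecMul_dotProduct_of_balance _ _ Y X β₀ hbal_vec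
  simp only [dotProduct, vecMul, mulVec, Pi.sub_apply, Pi.smul_apply, smul_eq_mul, ω,
    mul_assoc, ← mul_sum] at hidentity ⊢
  convert hidentity using 3 with i
  ring

/-- Under the CBPS moment conditions for the ATT, the AIPW estimate of μ₀|₁
equals the IPW estimate of μ₀|₁, for every coefficient vector β₀. -/
theorem aipw_eq_ipw_mu01_cbps
    (N K : ℕ) (hN : 0 < N) (hK : 0 < K)
    (W : Fin N → ℝ) (hW : ∀ i, W i = 0 ∨ W i = 1)
    (X : Fin N → Fin K → ℝ) (hX1 : ∀ i, X i ⟨0, hK⟩ = 1)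
    (Y : Fin N → ℝ)
    (p : Fin N → ℝ) (hp : ∀ i, p i ∈ Set.Ioo (0 : ℝ) 1)
    (hN1 : 0 < ∑ i, W i)
    (hbal : ∀ j, (∑ i, W i)⁻¹ * ∑ i, W i * X i j
      = (∑ i, W i)⁻¹ * ∑ i, p i * (1 - W i) / (1 - p i) * X i j)
    (β₀ : Fin K → ℝ) :
    (∑ i, W i)⁻¹ * ∑ i, p i * (1 - W i) / (1 - p i) * (Y i - ∑ j, X i j * β₀ j)
      + ∑ j, ((∑ i, W i)⁻¹ * ∑ i, W i * X i j) * β₀ j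
    = (∑ i, W i)⁻¹ * ∑ i, p i * (1 - W i) * Y i / (1 - p i) :=
  aipw_eq_ipw_mu01_cbps_general N K W X Y p hbal β₀
end

section
/- Suppose the estimated propensity scores p_i satisfy the CBPS sample moment conditions for the ATT, X̄₁ = N₁^{-1} ∑_{i=1}^N [p_i (1−W_i) / (1−p_i)] X_i, where N₁ = ∑_{i=1}^N W_i > 0 and X̄₁ = N₁^{-1} ∑_{i=1}^N W_i X_i, and let β̃₀ ∈ ℝ^K satisfy the weighted least squares first-order conditions ∑_{i=1}^N [p_i (1−W_i)/(1−p_i)] X_iᵀ (Y_i − X_i β̃₀) = 0. Then the IPWRA estimate of μ₀|₁ equals the IPW estimate of μ₀|₁: X̄₁ β̃₀ = N₁^{-1} ∑_{i=1}^N p_i (1−W_i) Y_i / (1−p_i). -/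
/-!
Weighted least squares with an intercept reproduces the weighted mean: the first-order condition
for the constant regressor says that the weighted residuals sum to zero. The CBPS balancing
conditions make the weighted covariate mean equal to `X̄₁`, so `X̄₁ β̃₀` is the weighted mean of the
fitted values, hence the weighted mean of `Y`, which is the IPW estimate.
-/

section WeightedLeastSquares

variable {ι κ R : Type*} [Fintype ι] [Fintype κ] [CommRing R]

theorem sum_vecMul_mul_eq_sum_mul_mulVec (a : ι → R) (X : ι → κ → R) (β : κ → R) :
    ∑ j, (∑ i, a i * X i j) * β j = ∑ i, a i * ∑ k, X i k * β k :=
  (Matrix.dotProduct_mulVec a (Matrix.of X) β).symm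

theorem sum_mul_fitted_eq_sum_mul_of_intercept (w Y : ι → R) (X : ι → κ → R) (β : κ → R)
    (j₀ : κ) (hX : ∀ i, X i j₀ = 1)
    (hfoc : ∑ i, w i * X i j₀ * (Y i - ∑ k, X i k * β k) = 0) :
    ∑ i, w i * ∑ k, X i k * β k = ∑ i, w i * Y i := by
  simp only [hX, mul_one, mul_sub, Finset.sum_sub_distrib] at hfoc
  exact (sub_eq_zero.mp hfoc).symm

end WeightedLeastSquares

theorem ipwra_eq_ipw_mu01_cbps_general
    (N K : ℕ) (hK : 0 < K)
    (W : Fin N → ℝ)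
    (X : Fin N → Fin K → ℝ) (hX1 : ∀ i, X i ⟨0, hK⟩ = 1)
    (Y : Fin N → ℝ)
    (p : Fin N → ℝ)
    (hbal : ∀ j, (∑ i, W i)⁻¹ * ∑ i, W i * X i j
      = (∑ i, W i)⁻¹ * ∑ i, p i * (1 - W i) / (1 - p i) * X i j)
    (βt₀ : Fin K → ℝ)
    (hfoc : ∀ j, ∑ i, (p i * (1 - W i) / (1 - p i)) * X i j
      * (Y i - ∑ k, X i k * βt₀ k) = 0) :
    ∑ j, ((∑ i, W i)⁻¹ * ∑ i, W i * X i j) * βt₀ j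
    = (∑ i, W i)⁻¹ * ∑ i, p i * (1 - W i) * Y i / (1 - p i) := by
  have hfit := sum_mul_fitted_eq_sum_mul_of_intercept _ Y X βt₀ _ hX1 (hfoc _)
  calc ∑ j, ((∑ i, W i)⁻¹ * ∑ i, W i * X i j) * βt₀ j
      = (∑ i, W i)⁻¹ * ∑ j, (∑ i, p i * (1 - W i) / (1 - p i) * X i j) * βt₀ j := by
        simp_rw [hbal, mul_assoc, ← Finset.mul_sum]
    _ = (∑ i, W i)⁻¹ * ∑ i, p i * (1 - W i) / (1 - p i) * Y i := by
        rw [sum_vecMul_mul_eq_sum_mul_mulVec, hfit]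
    _ = (∑ i, W i)⁻¹ * ∑ i, p i * (1 - W i) * Y i / (1 - p i) := by
        simp only [div_mul_eq_mul_div]

/-- Under the CBPS moment conditions for the ATT, the IPWRA estimate of μ₀|₁
equals the IPW estimate of μ₀|₁. -/
theorem ipwra_eq_ipw_mu01_cbps
    (N K : ℕ) (hN : 0 < N) (hK : 0 < K)
    (W : Fin N → ℝ) (hW : ∀ i, W i = 0 ∨ W i = 1)
    (X : Fin N → Fin K → ℝ) (hX1 : ∀ i, X i ⟨0, hK⟩ = 1)
    (Y : Fin N → ℝ)
    (p : Fin N → ℝ) (hp : ∀ i, p i ∈ Set.Ioo (0 : ℝ) 1)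
    (hN1 : 0 < ∑ i, W i)
    (hbal : ∀ j, (∑ i, W i)⁻¹ * ∑ i, W i * X i j
      = (∑ i, W i)⁻¹ * ∑ i, p i * (1 - W i) / (1 - p i) * X i j)
    (βt₀ : Fin K → ℝ)
    (hfoc : ∀ j, ∑ i, (p i * (1 - W i) / (1 - p i)) * X i j
      * (Y i - ∑ k, X i k * βt₀ k) = 0) :
    ∑ j, ((∑ i, W i)⁻¹ * ∑ i, W i * X i j) * βt₀ j
    = (∑ i, W i)⁻¹ * ∑ i, p i * (1 - W i) * Y i / (1 - p i) :=
  ipwra_eq_ipw_mu01_cbps_general N K hK W X hX1 Y p hbal βt₀ hfoc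
end

section
/- (Proposition 2.) Suppose the estimated propensity scores p_i ∈ (0,1) satisfy the CBPS sample moment conditions for the ATT, X̄₁ = N₁^{-1} ∑_{i=1}^N [p_i (1−W_i) / (1−p_i)] X_i, where N₁ = ∑_{i=1}^N W_i > 0 and X̄₁ = N₁^{-1} ∑_{i=1}^N W_i X_i. Let β₀ ∈ ℝ^K be arbitrary and let β̃₀ ∈ ℝ^K satisfy the weighted least squares first-order conditions ∑_{i=1}^N [p_i (1−W_i)/(1−p_i)] X_iᵀ (Y_i − X_i β̃₀) = 0. Then the IPW, AIPW, and IPWRA estimates of the ATT are numerically identical: Ȳ₁ − N₁^{-1} ∑_{i=1}^N p_i (1−W_i) Y_i / (1−p_i) = Ȳ₁ − [N₁^{-1} ∑_{i=1}^N [p_i (1−W_i)/(1−p_i)](Y_i − X_i β₀) + X̄₁ β₀] = Ȳ₁ − X̄₁ β̃₀, where Ȳ₁ = N₁^{-1} ∑_{i=1}^N W_i Y_i. -/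
/-!
Write `ω i = p i * (1 - W i) / (1 - p i)`. The balance condition says that the treated mean `X̄₁`
is the `ω`-weighted sum of the `X i` (scaled by `N₁⁻¹`), hence so is `X̄₁ β` for every `β`; this
alone makes the AIPW correction collapse to the IPW term. Since `X` has a constant column, the
weighted least squares normal equation for that column says that the `ω`-weighted residuals sum
to zero, i.e. `∑ ω i Y i = ∑ ω i (X i β̃₀)`, which identifies the IPWRA term with the IPW term.
-/

open Finset

section

variable {R ι κ : Type*} [CommRing R] [Fintype ι] [Fintype κ]

theorem sum_mul_sum_mul_eq_mul_sum_mul_sum (c : R) (a : ι → R) (X : ι → κ → R) (β : κ → R) :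
    ∑ j, (c * ∑ i, a i * X i j) * β j = c * ∑ i, a i * ∑ j, X i j * β j := by
  simp only [mul_sum, sum_mul]
  rw [sum_comm]
  exact sum_congr rfl fun i _ => sum_congr rfl fun j _ => by ring

variable {c : R} {W ω : ι → R} {X : ι → κ → R}

theorem balanced_mean_mul_eq (hbal : ∀ j, c * ∑ i, W i * X i j = c * ∑ i, ω i * X i j)
    (β : κ → R) :
    ∑ j, (c * ∑ i, W i * X i j) * β j = c * ∑ i, ω i * ∑ j, X i j * β j := by
  simp only [hbal]
  exact sum_mul_sum_mul_eq_mul_sum_mul_sum c ω X β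

theorem aipw_correction_eq_of_balance (hbal : ∀ j, c * ∑ i, W i * X i j = c * ∑ i, ω i * X i j)
    (Y : ι → R) (β : κ → R) :
    c * ∑ i, ω i * (Y i - ∑ j, X i j * β j) + ∑ j, (c * ∑ i, W i * X i j) * β j
      = c * ∑ i, ω i * Y i := by
  rw [balanced_mean_mul_eq hbal, ← mul_add, ← sum_add_distrib]
  exact congrArg _ (sum_congr rfl fun i _ => by ring)

theorem sum_mul_residual_eq_zero_of_intercept {Y : ι → R} {β : κ → R} (j₀ : κ)
    (hX : ∀ i, X i j₀ = 1)
    (hfoc : ∀ j, ∑ i, ω i * X i j * (Y i - ∑ k, X i k * β k) = 0) :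
    ∑ i, ω i * (Y i - ∑ k, X i k * β k) = 0 := by
  simpa only [hX, mul_one] using hfoc j₀

theorem balanced_mean_mul_eq_of_normal_equations
    (hbal : ∀ j, c * ∑ i, W i * X i j = c * ∑ i, ω i * X i j) {Y : ι → R} {β : κ → R}
    (j₀ : κ) (hX : ∀ i, X i j₀ = 1)
    (hfoc : ∀ j, ∑ i, ω i * X i j * (Y i - ∑ k, X i k * β k) = 0) :
    ∑ j, (c * ∑ i, W i * X i j) * β j = c * ∑ i, ω i * Y i := by
  have hres := sum_mul_residual_eq_zero_of_intercept j₀ hX hfoc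
  simp only [mul_sub, sum_sub_distrib, sub_eq_zero] at hres
  rw [balanced_mean_mul_eq hbal, hres]

end

theorem cbps_ipw_aipw_ipwra_att_equivalence_general
    (N K : ℕ) (hK : 0 < K)
    (W : Fin N → ℝ)
    (X : Fin N → Fin K → ℝ) (hX1 : ∀ i, X i ⟨0, hK⟩ = 1)
    (Y : Fin N → ℝ)
    (p : Fin N → ℝ)
    (hbal : ∀ j, (∑ i, W i)⁻¹ * ∑ i, W i * X i j
      = (∑ i, W i)⁻¹ * ∑ i, p i * (1 - W i) / (1 - p i) * X i j)
    (β₀ βt₀ : Fin K → ℝ)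
    (hfoc : ∀ j, ∑ i, (p i * (1 - W i) / (1 - p i)) * X i j
      * (Y i - ∑ k, X i k * βt₀ k) = 0) :
    ((∑ i, W i)⁻¹ * ∑ i, W i * Y i
        - (∑ i, W i)⁻¹ * ∑ i, p i * (1 - W i) * Y i / (1 - p i)
      = (∑ i, W i)⁻¹ * ∑ i, W i * Y i
        - ((∑ i, W i)⁻¹ * ∑ i, p i * (1 - W i) / (1 - p i) * (Y i - ∑ j, X i j * β₀ j)
          + ∑ j, ((∑ i, W i)⁻¹ * ∑ i, W i * X i j) * β₀ j))
    ∧ ((∑ i, W i)⁻¹ * ∑ i, W i * Y i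
        - (∑ i, W i)⁻¹ * ∑ i, p i * (1 - W i) * Y i / (1 - p i)
      = (∑ i, W i)⁻¹ * ∑ i, W i * Y i
        - ∑ j, ((∑ i, W i)⁻¹ * ∑ i, W i * X i j) * βt₀ j) := by
  have hipw : ∑ i, p i * (1 - W i) * Y i / (1 - p i) = ∑ i, p i * (1 - W i) / (1 - p i) * Y i :=
    sum_congr rfl fun i _ => mul_div_right_comm _ _ _
  rw [hipw, aipw_correction_eq_of_balance hbal,
    balanced_mean_mul_eq_of_normal_equations hbal ⟨0, hK⟩ hX1 hfoc]
  exact ⟨rfl, rfl⟩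

/-- Proposition 2: with CBPS weights for the ATT, the IPW, AIPW (linear
conditional mean), and IPWRA (linear conditional mean) estimates of the ATT
are numerically identical. -/
theorem cbps_ipw_aipw_ipwra_att_equivalence
    (N K : ℕ) (hN : 0 < N) (hK : 0 < K)
    (W : Fin N → ℝ) (hW : ∀ i, W i = 0 ∨ W i = 1)
    (X : Fin N → Fin K → ℝ) (hX1 : ∀ i, X i ⟨0, hK⟩ = 1)
    (Y : Fin N → ℝ)
    (p : Fin N → ℝ) (hp : ∀ i, p i ∈ Set.Ioo (0 : ℝ) 1)
    (hN1 : 0 < ∑ i, W i)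
    (hbal : ∀ j, (∑ i, W i)⁻¹ * ∑ i, W i * X i j
      = (∑ i, W i)⁻¹ * ∑ i, p i * (1 - W i) / (1 - p i) * X i j)
    (β₀ βt₀ : Fin K → ℝ)
    (hfoc : ∀ j, ∑ i, (p i * (1 - W i) / (1 - p i)) * X i j
      * (Y i - ∑ k, X i k * βt₀ k) = 0) :
    ((∑ i, W i)⁻¹ * ∑ i, W i * Y i
        - (∑ i, W i)⁻¹ * ∑ i, p i * (1 - W i) * Y i / (1 - p i)
      = (∑ i, W i)⁻¹ * ∑ i, W i * Y i
        - ((∑ i, W i)⁻¹ * ∑ i, p i * (1 - W i) / (1 - p i) * (Y i - ∑ j, X i j * β₀ j)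
          + ∑ j, ((∑ i, W i)⁻¹ * ∑ i, W i * X i j) * β₀ j))
    ∧ ((∑ i, W i)⁻¹ * ∑ i, W i * Y i
        - (∑ i, W i)⁻¹ * ∑ i, p i * (1 - W i) * Y i / (1 - p i)
      = (∑ i, W i)⁻¹ * ∑ i, W i * Y i
        - ∑ j, ((∑ i, W i)⁻¹ * ∑ i, W i * X i j) * βt₀ j) :=
  cbps_ipw_aipw_ipwra_att_equivalence_general N K hK W X hX1 Y p hbal β₀ βt₀ hfoc
end

section
/- Suppose the instrument propensity scores q¹_i ∈ (0,1) satisfy the IPT balancing condition for Z = 1, N^{-1} ∑_{i=1}^N Z_i X_i / q¹_i = X̄, and q⁰_i ∈ (0,1) satisfy the IPT balancing condition for Z = 0, N^{-1} ∑_{i=1}^N (1−Z_i) X_i / (1−q⁰_i) = X̄, where X̄ = N^{-1} ∑_{i=1}^N X_i. For each outcome V ∈ {Y, W}, let β_V,1, β_V,0 ∈ ℝ^K be arbitrary and let β̃_V,1, β̃_V,0 satisfy the WLS first-order conditions ∑_i (Z_i/q¹_i) X_iᵀ (V_i − X_i β̃_V,1) = 0 and ∑_i [(1−Z_i)/(1−q⁰_i)]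 X_iᵀ (V_i − X_i β̃_V,0) = 0. Denote by τ_V^{ipw}, τ_V^{aipw}, τ_V^{ipwra} the corresponding IPW, AIPW, and IPWRA ATE estimates for outcome V with treatment Z. If τ_W^{ipw} ≠ 0, then the three LATE estimates are numerically identical: τ_Y^{ipw}/τ_W^{ipw} = τ_Y^{aipw}/τ_W^{aipw} = τ_Y^{ipwra}/τ_W^{ipwra}. -/
/-!
Balancing `∑ᵢ wᵢ Xᵢⱼ = ∑ᵢ Xᵢⱼ` in every covariate extends by linearity to every linear
prediction `Xᵢ β`. Hence the regression corrections of AIPW cancel, and each AIPW arm equals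
the IPW arm. For IPWRA, the intercept column makes the weighted WLS residuals sum to zero, so
the weighted mean of the outcome equals the weighted, hence by balancing the plain, mean of the
fitted values, which is `X̄ β̃`. Thus all three ATE estimates coincide for `Y` and for `W`, and so
do their ratios.
-/

open Finset

section Balancing

variable {ι κ R : Type*} [Fintype ι] [Fintype κ] [CommRing R]
  {c : R} {w : ι → R} {X : ι → κ → R}

theorem mul_sum_weight_mul_linear_of_balance
    (hbal : ∀ j, c * ∑ i, w i * X i j = c * ∑ i, X i j) (β : κ → R) :
    c * ∑ i, w i * ∑ j, X i j * β j = c * ∑ i, ∑ j, X i j * β j := by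
  calc c * ∑ i, w i * ∑ j, X i j * β j
      = ∑ j, (c * ∑ i, w i * X i j) * β j := by
        simp only [mul_sum, sum_mul]
        rw [sum_comm]
        exact sum_congr rfl fun _ _ => sum_congr rfl fun _ _ => by ring
    _ = ∑ j, (c * ∑ i, X i j) * β j := by simp only [hbal]
    _ = c * ∑ i, ∑ j, X i j * β j := by
        simp only [mul_sum, sum_mul]
        rw [sum_comm]
        exact sum_congr rfl fun _ _ => sum_congr rfl fun _ _ => by ring

theorem aipw_arm_eq_ipw_arm_of_balance
    (hbal : ∀ j, c * ∑ i, w i * X i j = c * ∑ i, X i j) (V : ι → R) (β : κ → R) :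
    c * ∑ i, w i * (V i - ∑ j, X i j * β j) + c * ∑ i, ∑ j, X i j * β j
      = c * ∑ i, w i * V i := by
  rw [← mul_sum_weight_mul_linear_of_balance hbal β]
  simp only [mul_sub, sum_sub_distrib]
  ring

theorem wls_fitted_mean_eq_weighted_mean_of_balance
    (hbal : ∀ j, c * ∑ i, w i * X i j = c * ∑ i, X i j) {j₀ : κ} (hX₁ : ∀ i, X i j₀ = 1)
    {V : ι → R} {β : κ → R}
    (hfoc : ∀ j, ∑ i, w i * X i j * (V i - ∑ k, X i k * β k) = 0) :
    ∑ j, (c * ∑ i, X i j) * β j = c * ∑ i, w i * V i := by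
  have hresid : ∑ i, w i * V i = ∑ i, w i * ∑ k, X i k * β k := by
    have := hfoc j₀
    simp only [hX₁, mul_one, mul_sub, sum_sub_distrib] at this
    exact sub_eq_zero.mp this
  rw [hresid, mul_sum_weight_mul_linear_of_balance hbal, mul_sum]
  simp only [sum_mul, mul_sum]
  rw [sum_comm]
  exact sum_congr rfl fun _ _ => sum_congr rfl fun _ _ => by ring

end Balancing

theorem ipt_ipw_aipw_ipwra_late_equivalence_general
    (N K : ℕ) (hK : 0 < K)
    (W : Fin N → ℝ)
    (Z : Fin N → ℝ)
    (X : Fin N → Fin K → ℝ) (hX1 : ∀ i, X i ⟨0, hK⟩ = 1)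
    (Y : Fin N → ℝ)
    (q1 q0 : Fin N → ℝ)
    (hbal1 : ∀ j, (N : ℝ)⁻¹ * ∑ i, Z i * X i j / q1 i = (N : ℝ)⁻¹ * ∑ i, X i j)
    (hbal0 : ∀ j, (N : ℝ)⁻¹ * ∑ i, (1 - Z i) * X i j / (1 - q0 i)
      = (N : ℝ)⁻¹ * ∑ i, X i j)
    (βY1 βY0 βW1 βW0 βtY1 βtY0 βtW1 βtW0 : Fin K → ℝ)
    (hfocY1 : ∀ j, ∑ i, (Z i / q1 i) * X i j * (Y i - ∑ k, X i k * βtY1 k) = 0)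
    (hfocY0 : ∀ j, ∑ i, ((1 - Z i) / (1 - q0 i)) * X i j * (Y i - ∑ k, X i k * βtY0 k) = 0)
    (hfocW1 : ∀ j, ∑ i, (Z i / q1 i) * X i j * (W i - ∑ k, X i k * βtW1 k) = 0)
    (hfocW0 : ∀ j, ∑ i, ((1 - Z i) / (1 - q0 i)) * X i j * (W i - ∑ k, X i k * βtW0 k) = 0)
    (τYipw τWipw τYaipw τWaipw τYipwra τWipwra : ℝ)
    (hτYipw : τYipw = (N : ℝ)⁻¹ * ∑ i, Z i * Y i / q1 i
      - (N : ℝ)⁻¹ * ∑ i, (1 - Z i) * Y i / (1 - q0 i))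
    (hτWipw : τWipw = (N : ℝ)⁻¹ * ∑ i, Z i * W i / q1 i
      - (N : ℝ)⁻¹ * ∑ i, (1 - Z i) * W i / (1 - q0 i))
    (hτYaipw : τYaipw = ((N : ℝ)⁻¹ * ∑ i, Z i * (Y i - ∑ j, X i j * βY1 j) / q1 i
        + (N : ℝ)⁻¹ * ∑ i, ∑ j, X i j * βY1 j)
      - ((N : ℝ)⁻¹ * ∑ i, (1 - Z i) * (Y i - ∑ j, X i j * βY0 j) / (1 - q0 i)
        + (N : ℝ)⁻¹ * ∑ i, ∑ j, X i j * βY0 j))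
    (hτWaipw : τWaipw = ((N : ℝ)⁻¹ * ∑ i, Z i * (W i - ∑ j, X i j * βW1 j) / q1 i
        + (N : ℝ)⁻¹ * ∑ i, ∑ j, X i j * βW1 j)
      - ((N : ℝ)⁻¹ * ∑ i, (1 - Z i) * (W i - ∑ j, X i j * βW0 j) / (1 - q0 i)
        + (N : ℝ)⁻¹ * ∑ i, ∑ j, X i j * βW0 j))
    (hτYipwra : τYipwra = ∑ j, ((N : ℝ)⁻¹ * ∑ i, X i j) * βtY1 j
      - ∑ j, ((N : ℝ)⁻¹ * ∑ i, X i j) * βtY0 j)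
    (hτWipwra : τWipwra = ∑ j, ((N : ℝ)⁻¹ * ∑ i, X i j) * βtW1 j
      - ∑ j, ((N : ℝ)⁻¹ * ∑ i, X i j) * βtW0 j) :
    τYipw / τWipw = τYaipw / τWaipw ∧ τYipw / τWipw = τYipwra / τWipwra := by
  simp only [mul_div_right_comm] at hbal1 hbal0 hτYipw hτWipw hτYaipw hτWaipw
  have hYaipw : τYaipw = τYipw := by
    rw [hτYaipw, hτYipw, aipw_arm_eq_ipw_arm_of_balance hbal1,
      aipw_arm_eq_ipw_arm_of_balance hbal0]
  have hWaipw : τWaipw = τWipw := by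
    rw [hτWaipw, hτWipw, aipw_arm_eq_ipw_arm_of_balance hbal1,
      aipw_arm_eq_ipw_arm_of_balance hbal0]
  have hYipwra : τYipwra = τYipw := by
    rw [hτYipwra, hτYipw, wls_fitted_mean_eq_weighted_mean_of_balance hbal1 hX1 hfocY1,
      wls_fitted_mean_eq_weighted_mean_of_balance hbal0 hX1 hfocY0]
  have hWipwra : τWipwra = τWipw := by
    rw [hτWipwra, hτWipw, wls_fitted_mean_eq_weighted_mean_of_balance hbal1 hX1 hfocW1,
      wls_fitted_mean_eq_weighted_mean_of_balance hbal0 hX1 hfocW0]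
  exact ⟨by rw [hYaipw, hWaipw], by rw [hYipwra, hWipwra]⟩

/-- With IPT instrument-propensity-score weights, the IPW, AIPW (linear
conditional means), and IPWRA (linear conditional means) estimates of the LATE
are numerically identical. -/
theorem ipt_ipw_aipw_ipwra_late_equivalence
    (N K : ℕ) (hN : 0 < N) (hK : 0 < K)
    (W : Fin N → ℝ) (hW : ∀ i, W i = 0 ∨ W i = 1)
    (Z : Fin N → ℝ) (hZ : ∀ i, Z i = 0 ∨ Z i = 1)
    (X : Fin N → Fin K → ℝ) (hX1 : ∀ i, X i ⟨0, hK⟩ = 1)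
    (Y : Fin N → ℝ)
    (q1 q0 : Fin N → ℝ)
    (hq1 : ∀ i, q1 i ∈ Set.Ioo (0 : ℝ) 1) (hq0 : ∀ i, q0 i ∈ Set.Ioo (0 : ℝ) 1)
    (hbal1 : ∀ j, (N : ℝ)⁻¹ * ∑ i, Z i * X i j / q1 i = (N : ℝ)⁻¹ * ∑ i, X i j)
    (hbal0 : ∀ j, (N : ℝ)⁻¹ * ∑ i, (1 - Z i) * X i j / (1 - q0 i)
      = (N : ℝ)⁻¹ * ∑ i, X i j)
    (βY1 βY0 βW1 βW0 βtY1 βtY0 βtW1 βtW0 : Fin K → ℝ)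
    (hfocY1 : ∀ j, ∑ i, (Z i / q1 i) * X i j * (Y i - ∑ k, X i k * βtY1 k) = 0)
    (hfocY0 : ∀ j, ∑ i, ((1 - Z i) / (1 - q0 i)) * X i j * (Y i - ∑ k, X i k * βtY0 k) = 0)
    (hfocW1 : ∀ j, ∑ i, (Z i / q1 i) * X i j * (W i - ∑ k, X i k * βtW1 k) = 0)
    (hfocW0 : ∀ j, ∑ i, ((1 - Z i) / (1 - q0 i)) * X i j * (W i - ∑ k, X i k * βtW0 k) = 0)
    (τYipw τWipw τYaipw τWaipw τYipwra τWipwra : ℝ)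
    (hτYipw : τYipw = (N : ℝ)⁻¹ * ∑ i, Z i * Y i / q1 i
      - (N : ℝ)⁻¹ * ∑ i, (1 - Z i) * Y i / (1 - q0 i))
    (hτWipw : τWipw = (N : ℝ)⁻¹ * ∑ i, Z i * W i / q1 i
      - (N : ℝ)⁻¹ * ∑ i, (1 - Z i) * W i / (1 - q0 i))
    (hτYaipw : τYaipw = ((N : ℝ)⁻¹ * ∑ i, Z i * (Y i - ∑ j, X i j * βY1 j) / q1 i
        + (N : ℝ)⁻¹ * ∑ i, ∑ j, X i j * βY1 j)
      - ((N : ℝ)⁻¹ * ∑ i, (1 - Z i) * (Y i - ∑ j, X i j * βY0 j) / (1 - q0 i)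
        + (N : ℝ)⁻¹ * ∑ i, ∑ j, X i j * βY0 j))
    (hτWaipw : τWaipw = ((N : ℝ)⁻¹ * ∑ i, Z i * (W i - ∑ j, X i j * βW1 j) / q1 i
        + (N : ℝ)⁻¹ * ∑ i, ∑ j, X i j * βW1 j)
      - ((N : ℝ)⁻¹ * ∑ i, (1 - Z i) * (W i - ∑ j, X i j * βW0 j) / (1 - q0 i)
        + (N : ℝ)⁻¹ * ∑ i, ∑ j, X i j * βW0 j))
    (hτYipwra : τYipwra = ∑ j, ((N : ℝ)⁻¹ * ∑ i, X i j) * βtY1 j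
      - ∑ j, ((N : ℝ)⁻¹ * ∑ i, X i j) * βtY0 j)
    (hτWipwra : τWipwra = ∑ j, ((N : ℝ)⁻¹ * ∑ i, X i j) * βtW1 j
      - ∑ j, ((N : ℝ)⁻¹ * ∑ i, X i j) * βtW0 j)
    (hden : τWipw ≠ 0) :
    τYipw / τWipw = τYaipw / τWaipw ∧ τYipw / τWipw = τYipwra / τWipwra :=
  ipt_ipw_aipw_ipwra_late_equivalence_general N K hK W Z X hX1 Y q1 q0 hbal1 hbal0 βY1 βY0 βW1 βW0
    βtY1 βtY0 βtW1 βtW0 hfocY1 hfocY0 hfocW1 hfocW0 τYipw τWipw τYaipw τWaipw τYipwra τWipwra hτYipw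
    hτWipw hτYaipw hτWaipw hτYipwra hτWipwra
end

section
/- Suppose the instrument propensity scores q_i ∈ (0,1) satisfy the CBPS sample moment conditions for the ATT with treatment Z, X̄₁ = N₁^{-1} ∑_{i=1}^N [q_i (1−Z_i)/(1−q_i)] X_i, where N₁ = ∑_{i=1}^N Z_i > 0 and X̄₁ = N₁^{-1} ∑_{i=1}^N Z_i X_i. For each outcome V ∈ {Y, W}, let β_V ∈ ℝ^K be arbitrary and let β̃_V satisfy the WLS first-order conditions ∑_i [q_i (1−Z_i)/(1−q_i)] X_iᵀ (V_i − X_i β̃_V) = 0, and denote by τ_V^{ipw}, τ_V^{aipw}, τ_V^{ipwra} the corresponding IPW, AIPW, and IPWRA ATT estimates for outcome V with treatment Z. If τ_W^{ipw} ≠ 0, then the three LATT estimates are numerically identical: τ_Y^{ipw}/τ_W^{ipw} = τ_Y^{aipw}/τ_W^{aipw} = τ_Y^{ipwra}/τ_W^{ipwra}. -/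
/-!
Exact balancing of the covariate means makes the weighted control mean of any linear predictor
`X β` equal to its treated mean `X̄₁ β`, so the regression adjustment of AIPW cancels. The WLS normal
equation for the intercept says the weighted fitted values sum to the weighted outcomes, so IPWRA's
`X̄₁ β̃` equals the IPW control term. Hence the AIPW and IPWRA estimates of both ATTs (for `Y` and
for `W`) coincide with the IPW ones, and so do their ratios.
-/

open Finset

section LinearPredictor

variable {R ι κ : Type*} [CommRing R] [Fintype ι] [Fintype κ]

theorem sum_scaled_weighted_sum_mul_comm (c : R) (w : ι → R) (X : ι → κ → R) (β : κ → R) :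
    ∑ j, (c * ∑ i, w i * X i j) * β j = c * ∑ i, w i * ∑ j, X i j * β j := by
  simp only [mul_sum, sum_mul]
  rw [sum_comm]
  exact sum_congr rfl fun i _ => sum_congr rfl fun j _ => by ring

theorem weighted_sum_fitted_eq_of_normal_eq {w : ι → R} {X : ι → κ → R} {V : ι → R}
    {β : κ → R} {j₀ : κ} (hX : ∀ i, X i j₀ = 1)
    (hfoc : ∑ i, w i * X i j₀ * (V i - ∑ k, X i k * β k) = 0) :
    ∑ i, w i * ∑ k, X i k * β k = ∑ i, w i * V i := by
  simp only [hX, mul_one, mul_sub, sum_sub_distrib] at hfoc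
  exact (sub_eq_zero.mp hfoc).symm

variable {c : R} {a w : ι → R} {X : ι → κ → R}

theorem aipw_control_term_eq_of_balance (hbal : ∀ j, c * ∑ i, a i * X i j = c * ∑ i, w i * X i j)
    (V : ι → R) (β : κ → R) :
    c * ∑ i, w i * (V i - ∑ j, X i j * β j) + ∑ j, (c * ∑ i, a i * X i j) * β j
      = c * ∑ i, w i * V i := by
  simp only [hbal, sum_scaled_weighted_sum_mul_comm, mul_sub, sum_sub_distrib]
  ring

theorem ipwra_control_term_eq_of_balance (hbal : ∀ j, c * ∑ i, a i * X i j = c * ∑ i, w i * X i j)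
    {V : ι → R} {β : κ → R} {j₀ : κ} (hX : ∀ i, X i j₀ = 1)
    (hfoc : ∑ i, w i * X i j₀ * (V i - ∑ k, X i k * β k) = 0) :
    ∑ j, (c * ∑ i, a i * X i j) * β j = c * ∑ i, w i * V i := by
  simp only [hbal, sum_scaled_weighted_sum_mul_comm, weighted_sum_fitted_eq_of_normal_eq hX hfoc]

end LinearPredictor

theorem cbps_ipw_aipw_ipwra_latt_equivalence_general
    (N K : ℕ) (hK : 0 < K)
    (W : Fin N → ℝ)
    (Z : Fin N → ℝ)
    (X : Fin N → Fin K → ℝ) (hX1 : ∀ i, X i ⟨0, hK⟩ = 1)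
    (Y : Fin N → ℝ)
    (q : Fin N → ℝ)
    (hbal : ∀ j, (∑ i, Z i)⁻¹ * ∑ i, Z i * X i j
      = (∑ i, Z i)⁻¹ * ∑ i, q i * (1 - Z i) / (1 - q i) * X i j)
    (βY βW βtY βtW : Fin K → ℝ)
    (hfocY : ∀ j, ∑ i, (q i * (1 - Z i) / (1 - q i)) * X i j
      * (Y i - ∑ k, X i k * βtY k) = 0)
    (hfocW : ∀ j, ∑ i, (q i * (1 - Z i) / (1 - q i)) * X i j
      * (W i - ∑ k, X i k * βtW k) = 0)
    (τYipw τWipw τYaipw τWaipw τYipwra τWipwra : ℝ)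
    (hτYipw : τYipw = (∑ i, Z i)⁻¹ * ∑ i, Z i * Y i
      - (∑ i, Z i)⁻¹ * ∑ i, q i * (1 - Z i) * Y i / (1 - q i))
    (hτWipw : τWipw = (∑ i, Z i)⁻¹ * ∑ i, Z i * W i
      - (∑ i, Z i)⁻¹ * ∑ i, q i * (1 - Z i) * W i / (1 - q i))
    (hτYaipw : τYaipw = (∑ i, Z i)⁻¹ * ∑ i, Z i * Y i
      - ((∑ i, Z i)⁻¹ * ∑ i, q i * (1 - Z i) / (1 - q i) * (Y i - ∑ j, X i j * βY j)
        + ∑ j, ((∑ i, Z i)⁻¹ * ∑ i, Z i * X i j) * βY j))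
    (hτWaipw : τWaipw = (∑ i, Z i)⁻¹ * ∑ i, Z i * W i
      - ((∑ i, Z i)⁻¹ * ∑ i, q i * (1 - Z i) / (1 - q i) * (W i - ∑ j, X i j * βW j)
        + ∑ j, ((∑ i, Z i)⁻¹ * ∑ i, Z i * X i j) * βW j))
    (hτYipwra : τYipwra = (∑ i, Z i)⁻¹ * ∑ i, Z i * Y i
      - ∑ j, ((∑ i, Z i)⁻¹ * ∑ i, Z i * X i j) * βtY j)
    (hτWipwra : τWipwra = (∑ i, Z i)⁻¹ * ∑ i, Z i * W i
      - ∑ j, ((∑ i, Z i)⁻¹ * ∑ i, Z i * X i j) * βtW j) :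
    τYipw / τWipw = τYaipw / τWaipw ∧ τYipw / τWipw = τYipwra / τWipwra := by
  have hipw (V : Fin N → ℝ) : ∑ i, q i * (1 - Z i) * V i / (1 - q i)
      = ∑ i, q i * (1 - Z i) / (1 - q i) * V i :=
    sum_congr rfl fun i _ => mul_div_right_comm _ _ _
  have hYa : τYaipw = τYipw := by
    rw [hτYaipw, hτYipw, aipw_control_term_eq_of_balance hbal, hipw]
  have hWa : τWaipw = τWipw := by
    rw [hτWaipw, hτWipw, aipw_control_term_eq_of_balance hbal, hipw]
  have hYr : τYipwra = τYipw := by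
    rw [hτYipwra, hτYipw, ipwra_control_term_eq_of_balance hbal hX1 (hfocY _), hipw]
  have hWr : τWipwra = τWipw := by
    rw [hτWipwra, hτWipw, ipwra_control_term_eq_of_balance hbal hX1 (hfocW _), hipw]
  rw [hYa, hWa, hYr, hWr]
  exact ⟨rfl, rfl⟩

/-- With CBPS instrument-propensity-score weights for the ATT, the IPW, AIPW
(linear conditional mean), and IPWRA (linear conditional mean) estimates of the
LATT are numerically identical. -/
theorem cbps_ipw_aipw_ipwra_latt_equivalence
    (N K : ℕ) (hN : 0 < N) (hK : 0 < K)
    (W : Fin N → ℝ) (hW : ∀ i, W i = 0 ∨ W i = 1)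
    (Z : Fin N → ℝ) (hZ : ∀ i, Z i = 0 ∨ Z i = 1)
    (X : Fin N → Fin K → ℝ) (hX1 : ∀ i, X i ⟨0, hK⟩ = 1)
    (Y : Fin N → ℝ)
    (q : Fin N → ℝ) (hq : ∀ i, q i ∈ Set.Ioo (0 : ℝ) 1)
    (hN1 : 0 < ∑ i, Z i)
    (hbal : ∀ j, (∑ i, Z i)⁻¹ * ∑ i, Z i * X i j
      = (∑ i, Z i)⁻¹ * ∑ i, q i * (1 - Z i) / (1 - q i) * X i j)
    (βY βW βtY βtW : Fin K → ℝ)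
    (hfocY : ∀ j, ∑ i, (q i * (1 - Z i) / (1 - q i)) * X i j
      * (Y i - ∑ k, X i k * βtY k) = 0)
    (hfocW : ∀ j, ∑ i, (q i * (1 - Z i) / (1 - q i)) * X i j
      * (W i - ∑ k, X i k * βtW k) = 0)
    (τYipw τWipw τYaipw τWaipw τYipwra τWipwra : ℝ)
    (hτYipw : τYipw = (∑ i, Z i)⁻¹ * ∑ i, Z i * Y i
      - (∑ i, Z i)⁻¹ * ∑ i, q i * (1 - Z i) * Y i / (1 - q i))
    (hτWipw : τWipw = (∑ i, Z i)⁻¹ * ∑ i, Z i * W i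
      - (∑ i, Z i)⁻¹ * ∑ i, q i * (1 - Z i) * W i / (1 - q i))
    (hτYaipw : τYaipw = (∑ i, Z i)⁻¹ * ∑ i, Z i * Y i
      - ((∑ i, Z i)⁻¹ * ∑ i, q i * (1 - Z i) / (1 - q i) * (Y i - ∑ j, X i j * βY j)
        + ∑ j, ((∑ i, Z i)⁻¹ * ∑ i, Z i * X i j) * βY j))
    (hτWaipw : τWaipw = (∑ i, Z i)⁻¹ * ∑ i, Z i * W i
      - ((∑ i, Z i)⁻¹ * ∑ i, q i * (1 - Z i) / (1 - q i) * (W i - ∑ j, X i j * βW j)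
        + ∑ j, ((∑ i, Z i)⁻¹ * ∑ i, Z i * X i j) * βW j))
    (hτYipwra : τYipwra = (∑ i, Z i)⁻¹ * ∑ i, Z i * Y i
      - ∑ j, ((∑ i, Z i)⁻¹ * ∑ i, Z i * X i j) * βtY j)
    (hτWipwra : τWipwra = (∑ i, Z i)⁻¹ * ∑ i, Z i * W i
      - ∑ j, ((∑ i, Z i)⁻¹ * ∑ i, Z i * X i j) * βtW j)
    (hden : τWipw ≠ 0) :
    τYipw / τWipw = τYaipw / τWaipw ∧ τYipw / τWipw = τYipwra / τWipwra :=
  cbps_ipw_aipw_ipwra_latt_equivalence_general N K hK W Z X hX1 Y q hbal βY βW βtY βtW hfocY hfocW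
    τYipw τWipw τYaipw τWaipw τYipwra τWipwra hτYipw hτWipw hτYaipw hτWaipw hτYipwra hτWipwra
end
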